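/- For x < x_c = log₂(1/ln 2), the derivative difference h(x) = (ln 2)·2^x − e^x/(1+e^x) satisfies h(x) ≤ h(x_c⁻) = 1 − 1/(1+e^{−x_c}), i.e., h is bounded above on (−∞, x_c) by 1/(1+e^{x_c}). -/

import Mathlib

noncomputable section
open Real

def xc : ℝ := Real.logb 2 (1 / Real.log 2)

/-! With `σ = Real.sigmoid`, the function `h x = log 2 * 2 ^ x - σ x` is monotone on all of `ℝ`:
its derivative is `(log 2)² 2ˣ - σ x (1 - σ x)`, and with `u = eˣ` the inequality
`σ x (1 - σ x) ≤ (log 2)² 2ˣ` becomes `u ^ (1 - log 2) ≤ (log 2)² (1 + u)²`. That follows from the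
weighted AM-GM inequality for `u` and `1/4` with weights `1 - log 2, log 2`, together with
`4 ^ log 2 ≤ e`. Hence `h x ≤ h x_c = 1 - σ x_c`, because `2 ^ x_c = 1 / log 2`. -/

lemma four_rpow_log_two_le_exp_one : (4 : ℝ) ^ log 2 ≤ exp 1 := by
  have hlog4 : log 4 = 2 * log 2 := by
    rw [show (4 : ℝ) = 2 ^ 2 by norm_num, log_pow, Nat.cast_ofNat]
  rw [rpow_def_of_pos (by norm_num), hlog4, exp_le_exp]
  nlinarith [log_two_lt_d9, log_two_gt_d9]

lemma rpow_one_sub_log_two_le {u : ℝ} (hu : 0 < u) :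
    u ^ (1 - log 2) ≤ log 2 ^ 2 * (1 + u) ^ 2 := by
  have hl₀ := log_two_gt_d9
  have hl₁ := log_two_lt_d9
  have he := exp_one_lt_d9
  have amgm := geom_mean_le_arith_mean2_weighted (p₁ := u) (p₂ := 1 / 4) (w₁ := 1 - log 2)
    (w₂ := log 2) (by linarith) (by linarith) hu.le (by norm_num) (by ring)
  have hquarter : ((1 : ℝ) / 4) ^ log 2 * (4 : ℝ) ^ log 2 = 1 := by
    rw [← mul_rpow (by norm_num) (by norm_num)]; norm_num
  have hslope : (1 - log 2) * exp 1 ≤ 2 * log 2 ^ 2 := by nlinarith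
  have hconst : log 2 * (1 / 4) * exp 1 ≤ log 2 ^ 2 := by nlinarith
  calc u ^ (1 - log 2) = u ^ (1 - log 2) * ((1 : ℝ) / 4) ^ log 2 * (4 : ℝ) ^ log 2 := by
        rw [mul_assoc, hquarter, mul_one]
    _ ≤ ((1 - log 2) * u + log 2 * (1 / 4)) * exp 1 :=
        mul_le_mul amgm four_rpow_log_two_le_exp_one (by positivity)
          ((by positivity : (0 : ℝ) ≤ _).trans amgm)
    _ ≤ log 2 ^ 2 * (1 + u) ^ 2 := by
        nlinarith [mul_le_mul_of_nonneg_right hslope hu.le, sq_nonneg u]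

lemma sigmoid_mul_one_sub_sigmoid_le (x : ℝ) :
    sigmoid x * (1 - sigmoid x) ≤ log 2 ^ 2 * 2 ^ x := by
  have hu : 0 < exp x := exp_pos x
  have hσ : sigmoid x * (1 - sigmoid x) = exp x / (1 + exp x) ^ 2 := by
    rw [← sigmoid_neg, sigmoid_def, sigmoid_def, neg_neg, exp_neg]
    field_simp
    ring
  have htwo : (2 : ℝ) ^ x = exp x ^ log 2 := by
    rw [rpow_def_of_pos two_pos, ← exp_mul, mul_comm]
  rw [hσ, htwo, div_le_iff₀ (by positivity)]
  calc exp x = exp x ^ (1 - log 2) * exp x ^ log 2 := by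
        rw [← rpow_add hu, sub_add_cancel, rpow_one]
    _ ≤ log 2 ^ 2 * (1 + exp x) ^ 2 * exp x ^ log 2 := by
        gcongr
        exact rpow_one_sub_log_two_le hu
    _ = log 2 ^ 2 * exp x ^ log 2 * (1 + exp x) ^ 2 := by ring

lemma monotone_log_two_mul_two_rpow_sub_sigmoid :
    Monotone fun x : ℝ => log 2 * 2 ^ x - sigmoid x := by
  have hderiv (x : ℝ) : HasDerivAt (fun x : ℝ => log 2 * 2 ^ x - sigmoid x)
      (log 2 ^ 2 * 2 ^ x - sigmoid x * (1 - sigmoid x)) x := by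
    refine (((hasStrictDerivAt_const_rpow two_pos x).hasDerivAt.const_mul (log 2)).sub
      (hasDerivAt_sigmoid x)).congr_deriv ?_
    ring
  refine monotone_of_deriv_nonneg (fun x => (hderiv x).differentiableAt) fun x => ?_
  rw [(hderiv x).deriv, sub_nonneg]
  exact sigmoid_mul_one_sub_sigmoid_le x

lemma log_two_mul_two_rpow_xc : log 2 * 2 ^ xc = 1 := by
  rw [xc, rpow_logb two_pos (by norm_num) (by positivity), mul_one_div_cancel (by positivity)]

lemma one_div_one_add_exp (x : ℝ) : 1 / (1 + exp x) = sigmoid (-x) := by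
  rw [sigmoid_def, neg_neg, one_div]

lemma exp_div_one_add_exp (x : ℝ) : exp x / (1 + exp x) = sigmoid x := by
  rw [sigmoid_def, exp_neg]
  field_simp
  ring

theorem h_bounded_above (x : ℝ) (hx : x < xc) :
    Real.log 2 * (2:ℝ) ^ x - Real.exp x / (1 + Real.exp x) ≤ 1 / (1 + Real.exp xc) ∧
    1 / (1 + Real.exp xc) = 1 - 1 / (1 + Real.exp (-xc)) := by
  refine ⟨?_, ?_⟩
  · calc log 2 * 2 ^ x - exp x / (1 + exp x) = log 2 * 2 ^ x - sigmoid x := by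
          rw [exp_div_one_add_exp]
      _ ≤ log 2 * 2 ^ xc - sigmoid xc := monotone_log_two_mul_two_rpow_sub_sigmoid hx.le
      _ = 1 / (1 + exp xc) := by rw [log_two_mul_two_rpow_xc, ← sigmoid_neg, one_div_one_add_exp]
  · rw [one_div_one_add_exp, one_div_one_add_exp, neg_neg, sigmoid_neg]
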